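/- If G is a connected graph with no induced K_{1,3} and no induced hammer that contains an induced cycle of length at least 6 but is not itself a cycle, then G contains an induced C_6. -/

import Mathlib

open SimpleGraph

/-- The hammer: a triangle `0,1,2` with a pendant path `0 - 3 - 4`. -/
def hammer : SimpleGraph (Fin 5) :=
  SimpleGraph.fromEdgeSet {s(0, 1), s(0, 2), s(1, 2), s(0, 3), s(3, 4)}

/-!
If the induced cycle `C` has length at least 7 and `G` is not `C` itself, connectivity gives a
vertex `u` outside `C` adjacent to `C`. Claws centred on `C`, hammers and claws centred at `u`
constrain the set of cycle positions seen by `u` so strongly that it must be empty: a neighbour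
of `u` on `C` always has a cycle-neighbour that is also a neighbour of `u`, and a chase around
such a pair produces three neighbours of `u` pairwise non-adjacent on `C`, i.e. a claw.
-/

section

open Fin.CommRing

/-- Read `P i` as "`u` is adjacent to the `i`-th vertex of an induced cycle": the rules say that
claws centred on the cycle, hammers, and claws centred at `u` do not occur. -/
lemma Fin.forall_not_of_cyclic_rules {n : ℕ} [NeZero n] {P : Fin n → Prop}
    (hA : ∀ i, P i → P (i + 1) ∨ P (i - 1))
    (hB : ∀ i, P i → P (i + 1) → P (i + 2) ∨ P (i + 3))
    (hC₄ : ∀ i, P i → P (i + 2) → ¬ P (i + 4))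
    (hC₅ : ∀ i, P i → P (i + 2) → ¬ P (i + 5)) (i : Fin n) : ¬ P i := by
  have transport {a b : Fin n} (h : P a) (e : a = b) : P b := e ▸ h
  suffices no_pair : ∀ j, P j → ¬ P (j + 1) by
    intro hi
    rcases hA i hi with h | h
    exacts [no_pair i hi h, no_pair (i - 1) h (transport hi (by ring))]
  intro j h₀ h₁
  by_cases h₂ : P (j + 2)
  · have h₄ := hC₄ j h₀ h₂
    have h₃ : P (j + 3) := by
      rcases hB (j + 1) h₁ (transport h₂ (by ring)) with h | h
      exacts [transport h (by ring), absurd (transport h (by ring)) h₄]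
    rcases hB (j + 2) h₂ (transport h₃ (by ring)) with h | h
    · exact h₄ (transport h (by ring))
    · exact hC₄ (j + 1) h₁ (transport h₃ (by ring)) (transport h (by ring))
  · have h₃ : P (j + 3) := (hB j h₀ h₁).resolve_left h₂
    have h₄ : P (j + 4) := by
      rcases hA (j + 3) h₃ with h | h
      exacts [transport h (by ring), absurd (transport h (by ring)) h₂]
    rcases hB (j + 3) h₃ (transport h₄ (by ring)) with h | h
    · exact hC₄ (j + 1) h₁ (transport h₃ (by ring)) (transport h (by ring))
    · exact hC₅ (j + 1) h₁ (transport h₃ (by ring)) (transport h (by ring))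

lemma Fin.ne_of_sub_eq_natCast {n : ℕ} [NeZero n] {i j : Fin n} {k : ℕ} (h : j - i = k)
    (hk : 0 < k) (hkn : k < n) : i ≠ j := by
  rintro rfl
  rw [sub_self, eq_comm, ← Fin.val_eq_val, Fin.val_natCast, Fin.val_zero,
    Nat.mod_eq_of_lt hkn] at h
  omega

namespace SimpleGraph

variable {V : Type*} {G : SimpleGraph V}

lemma nonempty_claw_embedding {x a b d : V}
    (hxa : G.Adj x a) (hxb : G.Adj x b) (hxd : G.Adj x d)
    (hab : ¬G.Adj a b) (had : ¬G.Adj a d) (hbd : ¬G.Adj b d)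
    (nab : a ≠ b) (nad : a ≠ d) (nbd : b ≠ d) :
    Nonempty (completeBipartiteGraph (Fin 1) (Fin 3) ↪g G) := by
  have := hxa.ne; have := hxb.ne; have := hxd.ne
  have hinj : Function.Injective (Sum.elim (fun _ : Fin 1 => x) ![a, b, d]) := by
    rintro (p | p) (q | q) h
    · exact congrArg Sum.inl (Subsingleton.elim p q)
    all_goals fin_cases p <;> (try fin_cases q) <;> simp_all
  refine ⟨⟨⟨_, hinj⟩, fun {p q} => ?_⟩⟩
  simp only [Function.Embedding.coeFn_mk]
  rcases p with p | p <;> rcases q with q | q <;> (try fin_cases p) <;> (try fin_cases q) <;>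
    simp_all [adj_comm]

lemma nonempty_hammer_embedding {p₀ p₁ p₂ p₃ p₄ : V}
    (h01 : G.Adj p₀ p₁) (h02 : G.Adj p₀ p₂) (h12 : G.Adj p₁ p₂) (h03 : G.Adj p₀ p₃)
    (h34 : G.Adj p₃ p₄) (h13 : ¬G.Adj p₁ p₃) (h23 : ¬G.Adj p₂ p₃) (h14 : ¬G.Adj p₁ p₄)
    (h24 : ¬G.Adj p₂ p₄) (h04 : ¬G.Adj p₀ p₄)
    (n04 : p₀ ≠ p₄) (n13 : p₁ ≠ p₃) (n23 : p₂ ≠ p₃) (n14 : p₁ ≠ p₄) (n24 : p₂ ≠ p₄) :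
    Nonempty (hammer ↪g G) := by
  have := h01.ne; have := h02.ne; have := h12.ne; have := h03.ne; have := h34.ne
  have hinj : Function.Injective ![p₀, p₁, p₂, p₃, p₄] := by
    intro x y h
    fin_cases x <;> fin_cases y <;> simp_all
  refine ⟨⟨⟨_, hinj⟩, fun {x y} => ?_⟩⟩
  simp only [Function.Embedding.coeFn_mk]
  fin_cases x <;> fin_cases y <;> simp_all [hammer, adj_comm]

lemma Preconnected.exists_adj_of_notMem_of_mem (hG : G.Preconnected) {S : Set V} {u w : V}
    (hu : u ∉ S) (hw : w ∈ S) : ∃ x ∉ S, ∃ y ∈ S, G.Adj x y := by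
  obtain ⟨p⟩ := hG u w
  obtain ⟨d, -, hd₁, hd₂⟩ := p.exists_boundary_dart Sᶜ hu (not_not_intro hw)
  exact ⟨d.fst, hd₁, d.snd, not_not.mp hd₂, d.adj⟩

variable {n : ℕ} [NeZero n] {i j : Fin n} {k : ℕ}

lemma cycleGraph_adj_of_sub_eq_one (hn : 2 ≤ n) (h : j - i = 1) : (cycleGraph n).Adj i j := by
  rw [cycleGraph_adj', h, Fin.val_one', Nat.mod_eq_of_lt hn]
  exact Or.inr rfl

lemma cycleGraph_not_adj_of_sub_eq (h : j - i = k) (hk : 2 ≤ k) (hkn : k + 2 ≤ n) :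
    ¬ (cycleGraph n).Adj i j := by
  rw [cycleGraph_adj', ← neg_sub, h, Fin.val_neg', Fin.val_natCast,
    Nat.mod_eq_of_lt (by omega : k < n), Nat.mod_eq_of_lt (by omega : n - k < n)]
  omega

namespace Embedding

variable (c : cycleGraph n ↪g G) {u : V}

lemma adj_of_sub_eq_one (hn : 2 ≤ n) (h : j - i = 1) : G.Adj (c i) (c j) :=
  c.map_adj_iff.2 (cycleGraph_adj_of_sub_eq_one hn h)

lemma not_adj_of_sub_eq (h : j - i = k) (hk : 2 ≤ k) (hkn : k + 2 ≤ n) :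
    ¬ G.Adj (c i) (c j) :=
  c.map_adj_iff.not.2 (cycleGraph_not_adj_of_sub_eq h hk hkn)

lemma ne_of_sub_eq (h : j - i = k) (hk : 0 < k) (hkn : k < n) : c i ≠ c j :=
  c.injective.ne (Fin.ne_of_sub_eq_natCast h hk hkn)

lemma adj_add_one_or_sub_one_of_adj
    (hclaw : ¬ Nonempty (completeBipartiteGraph (Fin 1) (Fin 3) ↪g G)) (hn : 4 ≤ n)
    (hu : u ∉ Set.range c) (h : G.Adj u (c i)) : G.Adj u (c (i + 1)) ∨ G.Adj u (c (i - 1)) := by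
  by_contra! ⟨hsucc, hpred⟩
  have hcu (x : Fin n) : u ≠ c x := fun h => hu ⟨x, h.symm⟩
  exact hclaw (nonempty_claw_embedding (x := c i) (a := u) (b := c (i - 1)) (d := c (i + 1))
    h.symm (c.adj_of_sub_eq_one (by omega) (by ring)).symm
    (c.adj_of_sub_eq_one (by omega) (by ring)) hpred hsucc
    (c.not_adj_of_sub_eq (k := 2) (by ring) le_rfl hn) (hcu _) (hcu _)
    (c.ne_of_sub_eq (k := 2) (by ring) two_pos (by omega)))

lemma adj_add_two_or_add_three_of_adj_of_adj (hham : ¬ Nonempty (hammer ↪g G)) (hn : 5 ≤ n)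
    (hu : u ∉ Set.range c) (h₀ : G.Adj u (c i)) (h₁ : G.Adj u (c (i + 1))) :
    G.Adj u (c (i + 2)) ∨ G.Adj u (c (i + 3)) := by
  by_contra! ⟨h₂, h₃⟩
  have hcu (x : Fin n) : u ≠ c x := fun h => hu ⟨x, h.symm⟩
  exact hham (nonempty_hammer_embedding (p₀ := c (i + 1)) (p₁ := c i) (p₂ := u)
    (p₃ := c (i + 2)) (p₄ := c (i + 3))
    (h01 := (c.adj_of_sub_eq_one (by omega) (by ring)).symm) (h02 := h₁.symm) (h12 := h₀.symm)
    (h03 := c.adj_of_sub_eq_one (by omega) (by ring))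
    (h34 := c.adj_of_sub_eq_one (by omega) (by ring))
    (h13 := c.not_adj_of_sub_eq (k := 2) (by ring) le_rfl (by omega)) (h23 := h₂)
    (h14 := c.not_adj_of_sub_eq (k := 3) (by ring) (by norm_num) (by omega)) (h24 := h₃)
    (h04 := c.not_adj_of_sub_eq (k := 2) (by ring) le_rfl (by omega))
    (n04 := c.ne_of_sub_eq (k := 2) (by ring) two_pos (by omega))
    (n13 := c.ne_of_sub_eq (k := 2) (by ring) two_pos (by omega)) (n23 := hcu _)
    (n14 := c.ne_of_sub_eq (k := 3) (by ring) (by norm_num) (by omega)) (n24 := hcu _))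

lemma not_adj_of_adj_of_adj
    (hclaw : ¬ Nonempty (completeBipartiteGraph (Fin 1) (Fin 3) ↪g G))
    {l : Fin n} {m : ℕ} (hij : j - i = k) (hjl : l - j = m)
    (hk : 2 ≤ k) (hm : 2 ≤ m) (hn : k + m + 2 ≤ n) (hi : G.Adj u (c i)) (hj : G.Adj u (c j)) :
    ¬ G.Adj u (c l) := by
  intro hl
  have hil : l - i = ((k + m : ℕ) : Fin n) := by push_cast; rw [← hij, ← hjl]; ring
  exact hclaw (nonempty_claw_embedding hi hj hl (c.not_adj_of_sub_eq hij hk (by omega))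
    (c.not_adj_of_sub_eq hil (by omega) (by omega)) (c.not_adj_of_sub_eq hjl hm (by omega))
    (c.ne_of_sub_eq hij (by omega) (by omega)) (c.ne_of_sub_eq hil (by omega) (by omega))
    (c.ne_of_sub_eq hjl (by omega) (by omega)))

lemma not_adj_of_notMem_range
    (hclaw : ¬ Nonempty (completeBipartiteGraph (Fin 1) (Fin 3) ↪g G))
    (hham : ¬ Nonempty (hammer ↪g G)) (hn : 7 ≤ n) (hu : u ∉ Set.range c) (i : Fin n) :
    ¬ G.Adj u (c i) :=
  Fin.forall_not_of_cyclic_rules (P := fun i => G.Adj u (c i))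
    (fun _ => c.adj_add_one_or_sub_one_of_adj hclaw (by omega) hu)
    (fun _ => c.adj_add_two_or_add_three_of_adj_of_adj hham (by omega) hu)
    (fun _ => c.not_adj_of_adj_of_adj hclaw (k := 2) (m := 2) (by ring) (by ring) le_rfl
      le_rfl (by omega))
    (fun _ => c.not_adj_of_adj_of_adj hclaw (k := 2) (m := 3) (by ring) (by ring) le_rfl
      (by norm_num) (by omega)) i

end Embedding

end SimpleGraph

end

/-- A connected `{K_{1,3}, hammer}`-free graph containing an induced cycle of
length at least 6 that is not itself a cycle contains an induced `C₆`. -/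
theorem claw_hammer_free_contains_C6 {V : Type*} (G : SimpleGraph V) (hconn : G.Connected)
    (hclaw : ¬ Nonempty (completeBipartiteGraph (Fin 1) (Fin 3) ↪g G))
    (hham : ¬ Nonempty (hammer ↪g G))
    (hcyc : ∃ n : ℕ, 6 ≤ n ∧ Nonempty (cycleGraph n ↪g G))
    (hnotcyc : ¬ ∃ m : ℕ, 3 ≤ m ∧ Nonempty (G ≃g cycleGraph m)) :
    Nonempty (cycleGraph 6 ↪g G) := by
  obtain ⟨n, hn, ⟨c⟩⟩ := hcyc
  rcases hn.eq_or_lt with rfl | hn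
  · exact ⟨c⟩
  have : NeZero n := ⟨by omega⟩
  by_cases hsurj : Function.Surjective c
  · exact (hnotcyc ⟨n, by omega, ⟨(RelIso.ofSurjective c hsurj).symm⟩⟩).elim
  obtain ⟨u, hu⟩ := not_forall.mp hsurj
  obtain ⟨u, hu, -, ⟨i, rfl⟩, hui⟩ :=
    hconn.preconnected.exists_adj_of_notMem_of_mem hu (Set.mem_range_self (0 : Fin n))
  exact (c.not_adj_of_notMem_range hclaw hham hn hu i hui).elim
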